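/- arXiv:2109.09370 — 2 statements merged into one kernel-verified Lean document; each statement's English description precedes it below -/
import Mathlib

section
/- Let m ≥ 2, τ ∈ S_m, and suppose that the ratios |S_{n+1}(τ)|/|S_n(τ)| converge as n → ∞ to a limit L > 0. Fix l ≥ 2 and let {k_n} be any sequence with 1 ≤ k_n ≤ n-l+1. If τ does not contain tightly at least one of the patterns 12 and 21, then liminf_{n→∞} |A^{(n)}_{l;k_n} ∩ S_n(τ)| / |S_n(τ)| ≥ 1/L^{l-1}. If τ contains tightly neither 12 nor 21, then liminf_{n→∞} |A^{(n)}_{l;k_n} ∩ S_n(τ)| / |S_n(τ)| ≥ 2/L^{l-1}. -/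
open Filter

def Contains {n m : ℕ} (σ : Fin n → Fin n) (τ : Fin m → Fin m) : Prop :=
  ∃ f : Fin m → Fin n, StrictMono f ∧ ∀ j k : Fin m, σ (f j) < σ (f k) ↔ τ j < τ k

def Avoids {n m : ℕ} (σ : Fin n → Fin n) (τ : Fin m → Fin m) : Prop :=
  ¬ Contains σ τ

def AvoidSet (n : ℕ) {m : ℕ} (τ : Equiv.Perm (Fin m)) : Set (Equiv.Perm (Fin n)) :=
  {σ : Equiv.Perm (Fin n) | Avoids ⇑σ ⇑τ}

def ClusterAt {n : ℕ} (l k a : ℕ) (σ : Equiv.Perm (Fin n)) : Prop :=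
  (Finset.univ.filter fun i : Fin n => a ≤ (i : ℕ) + 1 ∧ (i : ℕ) + 1 < a + l).image
      (fun i => (σ i : ℕ) + 1) = Finset.Ico k (k + l)

def ClusterEvent (n l k : ℕ) : Set (Equiv.Perm (Fin n)) :=
  {σ : Equiv.Perm (Fin n) | ∃ a : ℕ, 1 ≤ a ∧ a ≤ n - l + 1 ∧ ClusterAt l k a σ}

def ClusterFree {m : ℕ} (τ : Equiv.Perm (Fin m)) : Prop :=
  ∀ l a k : ℕ, 2 ≤ l → l ≤ m - 1 → 1 ≤ a → a + l ≤ m + 1 → ¬ ClusterAt l k a τ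

def ContainsTightly12 {m : ℕ} (τ : Equiv.Perm (Fin m)) : Prop :=
  ∃ i j : Fin m, (j : ℕ) = (i : ℕ) + 1 ∧ (τ j : ℕ) = (τ i : ℕ) + 1

def ContainsTightly21 {m : ℕ} (τ : Equiv.Perm (Fin m)) : Prop :=
  ∃ i j : Fin m, (j : ℕ) = (i : ℕ) + 1 ∧ (τ i : ℕ) = (τ j : ℕ) + 1

def perm123 : Equiv.Perm (Fin 3) := Equiv.refl (Fin 3)

def perm321 : Equiv.Perm (Fin 3) :=
  ⟨![2, 1, 0], ![2, 1, 0], by intro x; fin_cases x <;> rfl, by intro x; fin_cases x <;> rfl⟩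

def p2413 : Equiv.Perm (Fin 4) :=
  ⟨![1, 3, 0, 2], ![2, 0, 3, 1], by intro x; fin_cases x <;> rfl, by intro x; fin_cases x <;> rfl⟩

def p3142 : Equiv.Perm (Fin 4) :=
  ⟨![2, 0, 3, 1], ![1, 3, 0, 2], by intro x; fin_cases x <;> rfl, by intro x; fin_cases x <;> rfl⟩

def SepSet (n : ℕ) : Set (Equiv.Perm (Fin n)) :=
  {σ : Equiv.Perm (Fin n) | Avoids ⇑σ ⇑p2413 ∧ Avoids ⇑σ ⇑p3142}

/-! Inflate the entry `k_n` of a `τ`-avoiding permutation of length `n - l + 1` into a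
monotone run of the values `k_n, …, k_n + l - 1`. The result lies in
`A^{(n)}_{l;k_n}`, and it still avoids `τ`: an occurrence of `τ` meeting the run at most once
collapses to an occurrence in the original permutation, while one meeting it twice meets it in
two consecutive entries of `τ` whose values must then be adjacent, so `τ` would contain `12`
(increasing run) or `21` (decreasing run) tightly. Inflation is injective, and for `l ≥ 2` the
two directions have disjoint images, so
`|A^{(n)}_{l;k_n} ∩ S_n(τ)| ≥ c |S_{n-l+1}(τ)|` with `c` the number of admissible directions,
while `|S_{n-l+1}(τ)| / |S_n(τ)| → 1 / L^{l-1}`. -/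

open Topology Function

section Occurrences

variable {α β γ : Type*} [LinearOrder α] [Preorder β] [Preorder γ] {m : ℕ}

theorem exists_covBy_of_two_mem_block {π : α → β} {R : Set α} (hR : R.OrdConnected)
    (hπR : ∀ x ∈ R, ∀ z ∈ R, ∀ y, π x < π y → π y < π z → y ∈ R) (hmono : StrictMonoOn π R)
    {f : Fin m → α} (hf : StrictMono f) {ρ : Fin m → γ} (hρ : Surjective ρ)
    (hfρ : ∀ j k, π (f j) < π (f k) ↔ ρ j < ρ k) {j₁ j₂ : Fin m} (h₁ : f j₁ ∈ R)
    (h₂ : f j₂ ∈ R) (hlt : j₁ < j₂) :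
    ∃ i j : Fin m, (j : ℕ) = i + 1 ∧ ρ i ⋖ ρ j := by
  set i : Fin m := ⟨j₁ + 1, by omega⟩
  have hi : f i ∈ R := hR.out h₁ h₂ ⟨hf.monotone (Fin.le_def.2 (by simp [i])),
    hf.monotone (Fin.le_def.2 (by simp [i]; omega))⟩
  refine ⟨j₁, i, rfl, (hfρ _ _).1 (hmono h₁ hi (hf (Fin.lt_def.2 (by simp [i])))), ?_⟩
  rintro c hlo hhi
  obtain ⟨u, rfl⟩ := hρ c
  rw [← hfρ] at hlo hhi
  have hu : f u ∈ R := hπR _ h₁ _ hi _ hlo hhi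
  have h₁u := hf.lt_iff_lt.1 ((hmono.lt_iff_lt h₁ hu).1 hlo)
  have hui := hf.lt_iff_lt.1 ((hmono.lt_iff_lt hu hi).1 hhi)
  simp only [Fin.lt_def, i] at h₁u hui
  omega

end Occurrences

section Patterns

variable {n n' m : ℕ}

theorem containsTightly12_of_covBy {τ : Equiv.Perm (Fin m)} {i j : Fin m}
    (hij : (j : ℕ) = i + 1) (h : τ i ⋖ τ j) : ContainsTightly12 τ :=
  ⟨i, j, hij, (Nat.covBy_iff_add_one_eq.1 (Fin.covBy_iff.1 h)).symm⟩

theorem containsTightly21_of_covBy {τ : Equiv.Perm (Fin m)} {i j : Fin m}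
    (hij : (j : ℕ) = i + 1) (h : τ j ⋖ τ i) : ContainsTightly21 τ :=
  ⟨i, j, hij, (Nat.covBy_iff_add_one_eq.1 (Fin.covBy_iff.1 h)).symm⟩

theorem contains_of_contains_of_collapse {π : Fin n' → Fin n'} {σ : Fin n → Fin n}
    {τ : Fin m → Fin m} (c : Fin n' → Fin n) (R : Set (Fin n'))
    (hc : ∀ x y, x < y → ¬(x ∈ R ∧ y ∈ R) → c x < c y)
    (hcπ : ∀ x y, ¬(x ∈ R ∧ y ∈ R) → (π x < π y ↔ σ (c x) < σ (c y)))
    {f : Fin m → Fin n'} (hf : StrictMono f) (hfτ : ∀ j k, π (f j) < π (f k) ↔ τ j < τ k)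
    (hfR : ∀ j k, f j ∈ R → f k ∈ R → j = k) : Contains σ τ := by
  refine ⟨c ∘ f, fun j k hjk => hc _ _ (hf hjk) fun h => hjk.ne (hfR j k h.1 h.2), fun j k => ?_⟩
  by_cases hjk : f j ∈ R ∧ f k ∈ R
  · obtain rfl := hfR j k hjk.1 hjk.2
    simp
  · exact (hcπ _ _ hjk).symm.trans (hfτ j k)

end Patterns

namespace PermInflation

def shiftAbove (v d y : ℕ) : ℕ := if y < v then y else y + d

def runVal (v d : ℕ) (inc : Bool) (t : ℕ) : ℕ := if inc then v + t else v + d - t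

section Values

variable {v d : ℕ}

theorem strictMono_shiftAbove (v d : ℕ) : StrictMono (shiftAbove v d) := by
  intro a b h
  unfold shiftAbove
  split_ifs <;> omega

theorem lt_shiftAbove_iff {r w : ℕ} (hr : v ≤ r ∧ r ≤ v + d) (hw : w ≠ v) :
    r < shiftAbove v d w ↔ v < w := by
  unfold shiftAbove
  split_ifs <;> omega

theorem shiftAbove_lt_iff {r w : ℕ} (hr : v ≤ r ∧ r ≤ v + d) :
    shiftAbove v d w < r ↔ w < v := by
  unfold shiftAbove
  split_ifs <;> omega

theorem shiftAbove_notMem_Icc {w : ℕ} (hw : w ≠ v) :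
    ¬(v ≤ shiftAbove v d w ∧ shiftAbove v d w ≤ v + d) := by
  unfold shiftAbove
  split_ifs <;> omega

theorem runVal_mem_Icc (inc : Bool) {t : ℕ} (ht : t ≤ d) :
    v ≤ runVal v d inc t ∧ runVal v d inc t ≤ v + d := by
  cases inc <;> simp only [runVal, Bool.false_eq_true, ↓reduceIte] <;> omega

theorem runVal_injOn (inc : Bool) {t t' : ℕ} (ht : t ≤ d) (ht' : t' ≤ d)
    (h : runVal v d inc t = runVal v d inc t') : t = t' := by
  cases inc <;> simp only [runVal, Bool.false_eq_true, ↓reduceIte] at h <;> omega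

theorem exists_runVal_eq (inc : Bool) {w : ℕ} (hw : v ≤ w ∧ w ≤ v + d) :
    ∃ t ≤ d, runVal v d inc t = w := by
  cases inc
  · exact ⟨v + d - w, by omega, by simp only [runVal, Bool.false_eq_true, ↓reduceIte]; omega⟩
  · exact ⟨w - v, by omega, by simp only [runVal, ↓reduceIte]; omega⟩

end Values

section Positions

variable {N d : ℕ}

def runSet (d : ℕ) (p : Fin N) : Set (Fin (N + d)) := {x | (p : ℕ) ≤ x ∧ (x : ℕ) ≤ p + d}

theorem mem_runSet {p : Fin N} {x : Fin (N + d)} : x ∈ runSet d p ↔ (p : ℕ) ≤ x ∧ (x : ℕ) ≤ p + d :=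
  Iff.rfl

theorem ordConnected_runSet (p : Fin N) : (runSet d p).OrdConnected :=
  ⟨fun _ hx _ hz _ hy => ⟨hx.1.trans hy.1, le_trans (Fin.le_def.1 hy.2) hz.2⟩⟩

theorem runSet_injective : Injective (runSet (N := N) d) := by
  intro p p' h
  have hp : (⟨p, by omega⟩ : Fin (N + d)) ∈ runSet d p' := h ▸ ⟨le_rfl, by simp⟩
  have hp' : (⟨p', by omega⟩ : Fin (N + d)) ∈ runSet d p := h.symm ▸ ⟨le_rfl, by simp⟩
  simp only [mem_runSet] at hp hp'
  omega

def collapse (d : ℕ) (p : Fin N) (x : Fin (N + d)) : Fin N :=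
  ⟨if (x : ℕ) < p then x else if (x : ℕ) ≤ p + d then p else x - d, by
    have := p.isLt; have := x.isLt; split_ifs <;> omega⟩

variable {p : Fin N}

theorem collapse_of_mem {x : Fin (N + d)} (hx : x ∈ runSet d p) : collapse d p x = p := by
  rw [mem_runSet] at hx
  ext
  simp only [collapse]
  split_ifs <;> omega

theorem collapse_ne_of_notMem {x : Fin (N + d)} (hx : x ∉ runSet d p) : collapse d p x ≠ p := by
  rw [mem_runSet] at hx
  simp only [collapse, ne_eq, Fin.ext_iff]
  split_ifs <;> omega

theorem collapse_lt_collapse {x y : Fin (N + d)} (hxy : x < y)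
    (h : ¬(x ∈ runSet d p ∧ y ∈ runSet d p)) : collapse d p x < collapse d p y := by
  simp only [mem_runSet] at h
  rw [Fin.lt_def] at hxy ⊢
  simp only [collapse]
  split_ifs <;> omega

theorem exists_notMem_collapse_eq {w : Fin N} (hw : w ≠ p) :
    ∃ x ∉ runSet d p, collapse d p x = w := by
  have hw' : (w : ℕ) ≠ p := Fin.val_ne_of_ne hw
  refine ⟨⟨if (w : ℕ) < p then w else w + d, by split_ifs <;> omega⟩, ?_, ?_⟩
  · simp only [mem_runSet]
    split_ifs <;> omega
  · ext
    simp only [collapse]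
    split_ifs <;> omega

end Positions

section InflateFun

variable {N : ℕ} (σ : Equiv.Perm (Fin N)) (v : Fin N) (d : ℕ) (inc : Bool)

open Classical in
/-- The entry of value `v` of `σ` (at position `σ.symm v`) is replaced by the increasing
(`inc = true`) or decreasing run of the values `v, …, v + d`; all indices are `0`-based. -/
noncomputable def inflateFun (x : Fin (N + d)) : ℕ :=
  if x ∈ runSet d (σ.symm v) then runVal v d inc (x - σ.symm v)
  else shiftAbove v d (σ (collapse d (σ.symm v) x))

variable {σ v d inc} {x y : Fin (N + d)}

theorem inflateFun_of_mem (hx : x ∈ runSet d (σ.symm v)) :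
    inflateFun σ v d inc x = runVal v d inc (x - σ.symm v) := if_pos hx

theorem inflateFun_of_notMem (hx : x ∉ runSet d (σ.symm v)) :
    inflateFun σ v d inc x = shiftAbove v d (σ (collapse d (σ.symm v) x)) := if_neg hx

theorem inflateFun_mem_Icc_of_mem (hx : x ∈ runSet d (σ.symm v)) :
    v ≤ inflateFun σ v d inc x ∧ inflateFun σ v d inc x ≤ v + d := by
  rw [inflateFun_of_mem hx]
  exact runVal_mem_Icc inc (by rw [mem_runSet] at hx; omega)

theorem apply_collapse_ne_of_notMem (hx : x ∉ runSet d (σ.symm v)) :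
    (σ (collapse d (σ.symm v) x) : ℕ) ≠ v := by
  rw [Ne, ← Fin.ext_iff, ← Equiv.eq_symm_apply]
  exact collapse_ne_of_notMem hx

theorem mem_runSet_iff_inflateFun_mem_Icc :
    x ∈ runSet d (σ.symm v) ↔ v ≤ inflateFun σ v d inc x ∧ inflateFun σ v d inc x ≤ v + d := by
  refine ⟨inflateFun_mem_Icc_of_mem, fun h => ?_⟩
  by_contra hx
  rw [inflateFun_of_notMem hx] at h
  exact shiftAbove_notMem_Icc (apply_collapse_ne_of_notMem hx) h

theorem inflateFun_lt (x : Fin (N + d)) : inflateFun σ v d inc x < N + d := by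
  by_cases hx : x ∈ runSet d (σ.symm v)
  · have := inflateFun_mem_Icc_of_mem (inc := inc) hx
    omega
  · rw [inflateFun_of_notMem hx]
    have := (σ (collapse d (σ.symm v) x)).isLt
    unfold shiftAbove
    split_ifs <;> omega

theorem inflateFun_lt_inflateFun_iff (h : ¬(x ∈ runSet d (σ.symm v) ∧ y ∈ runSet d (σ.symm v))) :
    inflateFun σ v d inc x < inflateFun σ v d inc y ↔
      σ (collapse d (σ.symm v) x) < σ (collapse d (σ.symm v) y) := by
  rw [Fin.lt_def]
  by_cases hx : x ∈ runSet d (σ.symm v)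
  · have hy : y ∉ runSet d (σ.symm v) := fun hy => h ⟨hx, hy⟩
    rw [inflateFun_of_notMem hy, collapse_of_mem hx, Equiv.apply_symm_apply]
    exact lt_shiftAbove_iff (inflateFun_mem_Icc_of_mem hx) (apply_collapse_ne_of_notMem hy)
  by_cases hy : y ∈ runSet d (σ.symm v)
  · rw [inflateFun_of_notMem hx, collapse_of_mem hy, Equiv.apply_symm_apply]
    exact shiftAbove_lt_iff (inflateFun_mem_Icc_of_mem hy)
  · rw [inflateFun_of_notMem hx, inflateFun_of_notMem hy]
    exact (strictMono_shiftAbove v d).lt_iff_lt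

theorem inflateFun_injective : Injective (inflateFun σ v d inc) := by
  intro x y hxy
  by_cases h : x ∈ runSet d (σ.symm v) ∧ y ∈ runSet d (σ.symm v)
  · obtain ⟨hx, hy⟩ := h
    rw [inflateFun_of_mem hx, inflateFun_of_mem hy] at hxy
    rw [mem_runSet] at hx hy
    have := runVal_injOn inc (by omega) (by omega) hxy
    ext
    omega
  · by_contra hne
    have hc : collapse d (σ.symm v) x ≠ collapse d (σ.symm v) y := by
      rcases lt_or_gt_of_ne hne with hlt | hlt
      · exact (collapse_lt_collapse hlt h).ne
      · exact (collapse_lt_collapse hlt (h ∘ And.symm)).ne'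
    rcases lt_or_gt_of_ne (σ.injective.ne hc) with hσ | hσ
    · exact ((inflateFun_lt_inflateFun_iff h).2 hσ).ne hxy
    · exact ((inflateFun_lt_inflateFun_iff (h ∘ And.symm)).2 hσ).ne' hxy

end InflateFun

variable {N : ℕ}

noncomputable def inflate (σ : Equiv.Perm (Fin N)) (v : Fin N) (d : ℕ) (inc : Bool) :
    Equiv.Perm (Fin (N + d)) :=
  Equiv.ofBijective (fun x => ⟨inflateFun σ v d inc x, inflateFun_lt x⟩)
    (Finite.injective_iff_bijective.1 fun _ _ h => inflateFun_injective (Fin.val_eq_of_eq h))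

variable {σ : Equiv.Perm (Fin N)} {v : Fin N} {d : ℕ} {inc : Bool}

theorem inflate_apply (x : Fin (N + d)) : (inflate σ v d inc x : ℕ) = inflateFun σ v d inc x :=
  rfl

theorem strictMonoOn_inflate_true : StrictMonoOn (inflate σ v d true) (runSet d (σ.symm v)) := by
  intro x hx y hy hxy
  rw [Fin.lt_def, inflate_apply, inflate_apply, inflateFun_of_mem hx, inflateFun_of_mem hy]
  rw [mem_runSet] at hx hy
  simp only [runVal, ↓reduceIte]
  omega

theorem strictAntiOn_inflate_false : StrictAntiOn (inflate σ v d false) (runSet d (σ.symm v)) := by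
  intro x hx y hy hxy
  rw [Fin.lt_def, inflate_apply, inflate_apply, inflateFun_of_mem hx, inflateFun_of_mem hy]
  rw [mem_runSet] at hx hy
  simp only [runVal, Bool.false_eq_true, ↓reduceIte]
  omega

theorem mem_runSet_of_inflate_between {x y z : Fin (N + d)} (hx : x ∈ runSet d (σ.symm v))
    (hz : z ∈ runSet d (σ.symm v)) (hxy : inflate σ v d inc x < inflate σ v d inc y)
    (hyz : inflate σ v d inc y < inflate σ v d inc z) : y ∈ runSet d (σ.symm v) := by
  rw [Fin.lt_def, inflate_apply, inflate_apply] at hxy hyz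
  have := inflateFun_mem_Icc_of_mem (inc := inc) hx
  have := inflateFun_mem_Icc_of_mem (inc := inc) hz
  exact (mem_runSet_iff_inflateFun_mem_Icc (inc := inc)).2 ⟨by omega, by omega⟩

theorem clusterAt_inflate :
    ClusterAt (d + 1) ((v : ℕ) + 1) ((σ.symm v : ℕ) + 1) (inflate σ v d inc) := by
  unfold ClusterAt
  ext w
  simp only [Finset.mem_image, Finset.mem_filter, Finset.mem_univ, true_and, Finset.mem_Ico]
  constructor
  · rintro ⟨x, hx, rfl⟩
    have := inflateFun_mem_Icc_of_mem (inc := inc) (mem_runSet.2 ⟨by omega, by omega⟩ :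
      x ∈ runSet d (σ.symm v))
    rw [inflate_apply]
    omega
  · intro hw
    obtain ⟨t, ht, hrun⟩ := exists_runVal_eq (v := v) (d := d) inc (w := w - 1) ⟨by omega, by omega⟩
    have hp := (σ.symm v).isLt
    refine ⟨⟨σ.symm v + t, by omega⟩, by simp only; omega, ?_⟩
    rw [inflate_apply, inflateFun_of_mem (mem_runSet.2 ⟨by simp, by simp [ht]⟩),
      Nat.add_sub_cancel_left, hrun]
    omega

theorem contains_of_contains_inflate {m : ℕ} {τ : Equiv.Perm (Fin m)}
    (h : Contains (inflate σ v d inc) τ) :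
    Contains σ τ ∨ if inc then ContainsTightly12 τ else ContainsTightly21 τ := by
  obtain ⟨f, hf, hfτ⟩ := h
  by_cases hfR : ∀ j k, f j ∈ runSet d (σ.symm v) → f k ∈ runSet d (σ.symm v) → j = k
  · refine Or.inl (contains_of_contains_of_collapse (collapse d (σ.symm v)) _
      (fun _ _ => collapse_lt_collapse) (fun x y hxy => ?_) hf hfτ hfR)
    rw [Fin.lt_def, inflate_apply, inflate_apply]
    exact inflateFun_lt_inflateFun_iff hxy
  push Not at hfR
  obtain ⟨j₁, j₂, h₁, h₂, hne⟩ := hfR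
  wlog hlt : j₁ < j₂ generalizing j₁ j₂
  · exact this j₂ j₁ h₂ h₁ hne.symm (hne.symm.lt_of_le (not_lt.1 hlt))
  right
  cases inc
  · obtain ⟨i, j, hij, hcov⟩ := exists_covBy_of_two_mem_block (ordConnected_runSet _)
      (π := OrderDual.toDual ∘ inflate σ v d false) (ρ := OrderDual.toDual ∘ τ)
      (fun _ hx _ hz _ hxy hyz => mem_runSet_of_inflate_between hz hx hyz hxy)
      strictAntiOn_inflate_false.dual_right hf
      (OrderDual.toDual.surjective.comp τ.surjective) (fun j k => hfτ k j) h₁ h₂ hlt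
    exact containsTightly21_of_covBy hij (toDual_covBy_toDual_iff.1 hcov)
  · obtain ⟨i, j, hij, hcov⟩ := exists_covBy_of_two_mem_block (ordConnected_runSet _)
      (fun _ hx _ hz _ => mem_runSet_of_inflate_between hx hz) strictMonoOn_inflate_true hf
      τ.surjective hfτ h₁ h₂ hlt
    exact containsTightly12_of_covBy hij hcov

theorem inflate_injective₂ (hd : 1 ≤ d) {σ' : Equiv.Perm (Fin N)} {inc' : Bool}
    (h : inflate σ v d inc = inflate σ' v d inc') : σ = σ' ∧ inc = inc' := by
  have hp : σ.symm v = σ'.symm v := runSet_injective <| Set.ext fun x => by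
    rw [mem_runSet_iff_inflateFun_mem_Icc (inc := inc),
      mem_runSet_iff_inflateFun_mem_Icc (inc := inc'), ← inflate_apply, ← inflate_apply, h]
  have hσ : σ = σ' := by
    ext w
    by_cases hw : w = σ.symm v
    · rw [hw, Equiv.apply_symm_apply, hp, Equiv.apply_symm_apply]
    · obtain ⟨x, hx, rfl⟩ := exists_notMem_collapse_eq (d := d) hw
      have hx' : x ∉ runSet d (σ'.symm v) := hp ▸ hx
      have hxx := congrArg (fun π => (π x : ℕ)) h
      simp only [inflate_apply, inflateFun_of_notMem hx, inflateFun_of_notMem hx'] at hxx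
      rw [(strictMono_shiftAbove v d).injective hxx, hp]
  subst hσ
  refine ⟨rfl, ?_⟩
  have hpN := (σ.symm v).isLt
  have hmem : (⟨σ.symm v, by omega⟩ : Fin (N + d)) ∈ runSet d (σ.symm v) := ⟨le_rfl, by simp⟩
  have hval := congrArg (fun π => (π ⟨σ.symm v, by omega⟩ : ℕ)) h
  simp only [inflate_apply, inflateFun_of_mem hmem, Nat.sub_self, runVal] at hval
  cases inc <;> cases inc' <;>
    first | rfl | (simp only [Bool.false_eq_true, ↓reduceIte, add_zero] at hval; omega)

end PermInflation

open PermInflation in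
theorem card_mul_ncard_avoidSet_le_ncard_clusterEvent {m N d : ℕ} {τ : Equiv.Perm (Fin m)}
    (hd : 1 ≤ d) (v : Fin N) {D : Finset Bool}
    (hD : ∀ inc ∈ D, ¬ if inc then ContainsTightly12 τ else ContainsTightly21 τ) :
    D.card * (AvoidSet N τ).ncard ≤
      (ClusterEvent (N + d) (d + 1) ((v : ℕ) + 1) ∩ AvoidSet (N + d) τ).ncard := by
  rw [← Set.ncard_coe_finset, ← Set.ncard_prod]
  refine Set.ncard_le_ncard_of_injOn (fun q => inflate q.2 v d q.1) ?_ ?_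
  · rintro ⟨inc, σ⟩ ⟨hinc, hσ⟩
    refine ⟨⟨(σ.symm v : ℕ) + 1, by omega, by have := (σ.symm v).isLt; omega,
      clusterAt_inflate⟩, fun h => ?_⟩
    rcases contains_of_contains_inflate h with h | h
    · exact hσ h
    · exact hD inc hinc h
  · rintro ⟨inc, σ⟩ - ⟨inc', σ'⟩ - h
    obtain ⟨rfl, rfl⟩ := inflate_injective₂ hd h
    rfl

section Ratios

variable {a : ℕ → ℝ} {L : ℝ}

theorem eventually_ne_zero_of_tendsto_succ_div (hL : L ≠ 0)
    (h : Tendsto (fun n => a (n + 1) / a n) atTop (𝓝 L)) : ∀ᶠ n in atTop, a n ≠ 0 :=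
  (h.eventually_ne hL).mono fun n hn ha => hn (by rw [ha, div_zero])

theorem tendsto_add_div_of_tendsto_succ_div (hL : L ≠ 0)
    (h : Tendsto (fun n => a (n + 1) / a n) atTop (𝓝 L)) (d : ℕ) :
    Tendsto (fun n => a (n + d) / a n) atTop (𝓝 (L ^ d)) := by
  have ha := eventually_ne_zero_of_tendsto_succ_div hL h
  induction d with
  | zero =>
    refine tendsto_const_nhds.congr' ?_
    filter_upwards [ha] with n hn
    rw [pow_zero, add_zero, div_self hn]
  | succ d ih =>
    rw [pow_succ']
    refine ((h.comp (tendsto_add_atTop_nat d)).mul ih).congr' ?_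
    filter_upwards [(tendsto_add_atTop_nat d).eventually ha] with n hn
    rw [Function.comp_apply, ← add_assoc, div_mul_div_cancel₀ hn]

theorem tendsto_sub_div_of_tendsto_succ_div (hL : L ≠ 0)
    (h : Tendsto (fun n => a (n + 1) / a n) atTop (𝓝 L)) (d : ℕ) :
    Tendsto (fun n => a (n - d) / a n) atTop (𝓝 (L ^ d)⁻¹) := by
  refine (((tendsto_add_div_of_tendsto_succ_div hL h d).comp (tendsto_sub_atTop_nat d)).inv₀
    (pow_ne_zero d hL)).congr' ?_
  filter_upwards [eventually_ge_atTop d] with n hn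
  rw [Function.comp_apply, Nat.sub_add_cancel hn, inv_div]

theorem le_liminf_div_of_mul_le {b : ℕ → ℝ} {c : ℝ} (hL : L ≠ 0)
    (h : Tendsto (fun n => a (n + 1) / a n) atTop (𝓝 L)) (d : ℕ) (ha : ∀ n, 0 ≤ a n)
    (hba : ∀ n, b n ≤ a n) (hab : ∀ᶠ n in atTop, c * a (n - d) ≤ b n) :
    c / L ^ d ≤ liminf (fun n => b n / a n) atTop := by
  have hlim := (tendsto_sub_div_of_tendsto_succ_div hL h d).const_mul c
  rw [← div_eq_mul_inv] at hlim
  rw [← hlim.liminf_eq]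
  refine liminf_le_liminf ?_ hlim.isBoundedUnder_ge
    (isCoboundedUnder_ge_of_le atTop (x := 1) fun n => div_le_one_of_le₀ (hba n) (ha n))
  filter_upwards [hab] with n hn
  rw [← mul_div_assoc]
  exact div_le_div_of_nonneg_right hn (ha n)

end Ratios

theorem avoid_cluster_liminf_lower_general (m : ℕ) (τ : Equiv.Perm (Fin m))
    (L : ℝ) (hL : 0 < L)
    (hconv : Filter.Tendsto
      (fun n : ℕ => ((AvoidSet (n + 1) τ).ncard : ℝ) / ((AvoidSet n τ).ncard : ℝ))
      Filter.atTop (nhds L))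
    (l : ℕ) (hl : 2 ≤ l) (k : ℕ → ℕ) (hk : ∀ n : ℕ, 1 ≤ k n ∧ k n ≤ n - l + 1) :
    ((¬ ContainsTightly12 τ ∨ ¬ ContainsTightly21 τ) →
      1 / L ^ (l - 1) ≤
        Filter.liminf
          (fun n : ℕ => ((ClusterEvent n l (k n) ∩ AvoidSet n τ).ncard : ℝ) /
            ((AvoidSet n τ).ncard : ℝ)) Filter.atTop) ∧
    ((¬ ContainsTightly12 τ ∧ ¬ ContainsTightly21 τ) →
      2 / L ^ (l - 1) ≤
        Filter.liminf
          (fun n : ℕ => ((ClusterEvent n l (k n) ∩ AvoidSet n τ).ncard : ℝ) /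
            ((AvoidSet n τ).ncard : ℝ)) Filter.atTop) := by
  have key (D : Finset Bool)
      (hD : ∀ inc ∈ D, ¬ if inc then ContainsTightly12 τ else ContainsTightly21 τ) :
      (D.card : ℝ) / L ^ (l - 1) ≤ liminf (fun n => ((ClusterEvent n l (k n) ∩
        AvoidSet n τ).ncard : ℝ) / (AvoidSet n τ).ncard) atTop := by
    refine le_liminf_div_of_mul_le hL.ne' hconv (l - 1) (fun n => Nat.cast_nonneg _)
      (fun n => by exact_mod_cast Set.ncard_le_ncard Set.inter_subset_right) ?_
    filter_upwards [eventually_ge_atTop l] with n hn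
    obtain ⟨N, rfl⟩ : ∃ N, n = N + (l - 1) := ⟨n - (l - 1), by omega⟩
    have hkN := hk (N + (l - 1))
    have hcount := card_mul_ncard_avoidSet_le_ncard_clusterEvent (N := N) (d := l - 1) (by omega)
      ⟨k (N + (l - 1)) - 1, by omega⟩ hD
    rw [Nat.sub_add_cancel (by omega : 1 ≤ l), Nat.sub_add_cancel hkN.1] at hcount
    rw [Nat.add_sub_cancel]
    exact_mod_cast hcount
  refine ⟨?_, fun ⟨h12, h21⟩ => by simpa using key Finset.univ (by simp [h12, h21])⟩
  rintro (h12 | h21)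
  · simpa using key {true} (by simpa using h12)
  · simpa using key {false} (by simpa using h21)

/-- liminf lower bounds `1/L^{l-1}` and `2/L^{l-1}` under the tight-containment
hypotheses. -/
theorem avoid_cluster_liminf_lower (m : ℕ) (hm : 2 ≤ m) (τ : Equiv.Perm (Fin m))
    (L : ℝ) (hL : 0 < L)
    (hconv : Filter.Tendsto
      (fun n : ℕ => ((AvoidSet (n + 1) τ).ncard : ℝ) / ((AvoidSet n τ).ncard : ℝ))
      Filter.atTop (nhds L))
    (l : ℕ) (hl : 2 ≤ l) (k : ℕ → ℕ) (hk : ∀ n : ℕ, 1 ≤ k n ∧ k n ≤ n - l + 1) :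
    ((¬ ContainsTightly12 τ ∨ ¬ ContainsTightly21 τ) →
      1 / L ^ (l - 1) ≤
        Filter.liminf
          (fun n : ℕ => ((ClusterEvent n l (k n) ∩ AvoidSet n τ).ncard : ℝ) /
            ((AvoidSet n τ).ncard : ℝ)) Filter.atTop) ∧
    ((¬ ContainsTightly12 τ ∧ ¬ ContainsTightly21 τ) →
      2 / L ^ (l - 1) ≤
        Filter.liminf
          (fun n : ℕ => ((ClusterEvent n l (k n) ∩ AvoidSet n τ).ncard : ℝ) /
            ((AvoidSet n τ).ncard : ℝ)) Filter.atTop) :=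
  avoid_cluster_liminf_lower_general m τ L hL hconv l hl k hk
end

section
/- Let m ≥ 2 and let τ ∈ S_m be cluster-free. Let l ≥ 2, n ≥ l+2, let ρ ∈ S_l avoid τ, and let η ∈ S_{n-l+1} avoid τ, with η_a = k for some a and k with 1 ≤ a, k ≤ n-l+1. Define σ^ρ ∈ S_n by: σ^ρ_i = η_i if i < a and η_i < k; σ^ρ_i = η_i + l - 1 if i < a and η_i > k; σ^ρ_{a+j} = k - 1 + ρ_{j+1} for j = 0, 1, …, l-1; and for i ≥ a+l, σ^ρ_i = η_{i-l+1} if η_{i-l+1} < k and σ^ρ_i = η_{i-l+1} + l - 1 if η_{i-l+1} > k. Then σ^ρ is a permutation in S_n that avoids τ. -/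
open Filter

/-! An occurrence of `τ` in `σ` meets the inserted block either in all of its entries, which gives
an occurrence of `τ` in `ρ`, or in at most one, which gives an occurrence in `η` after collapsing
the block to a single position. Meeting it in `s` entries with `2 ≤ s ≤ m - 1` is impossible: the
positions and the values of `τ` at those entries would both be intervals, a cluster of `τ`. -/

open Finset

theorem Finset.eq_Ico_min'_of_ordConnected {S : Finset ℕ} (hS : (S : Set ℕ).OrdConnected)
    (hne : S.Nonempty) : S = Ico (S.min' hne) (S.min' hne + #S) := by
  have hle : S.min' hne ≤ S.max' hne := min'_le _ _ (max'_mem S hne)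
  have hIcc : S = Icc (S.min' hne) (S.max' hne) := by
    ext x
    refine ⟨fun hx => mem_Icc.2 ⟨min'_le _ _ hx, le_max' _ _ hx⟩, fun hx => ?_⟩
    exact hS.out (min'_mem S hne) (max'_mem S hne) (by simpa using hx)
  have hcard : #S = S.max' hne + 1 - S.min' hne := by
    conv_lhs => rw [hIcc]
    exact Nat.card_Icc _ _
  ext x
  rw [mem_Ico, hcard]
  conv_lhs => rw [hIcc]
  rw [mem_Icc]
  omega

/-- An interval of positions on which `σ` takes an interval of values. The value condition is
phrased as a separation so that it pulls back along pattern occurrences (`IsBlock.preimage`). -/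
def IsBlock {n : ℕ} (σ : Fin n → Fin n) (I : Finset (Fin n)) : Prop :=
  (↑(I.image Fin.val) : Set ℕ).OrdConnected ∧
    ∀ i ∉ I, (∀ j ∈ I, σ i < σ j) ∨ (∀ j ∈ I, σ j < σ i)

theorem IsBlock.preimage {n m : ℕ} {σ : Fin n → Fin n} {τ : Fin m → Fin m} {I : Finset (Fin n)}
    (hI : IsBlock σ I) {f : Fin m → Fin n} (hf : StrictMono f)
    (hord : ∀ j k, σ (f j) < σ (f k) ↔ τ j < τ k) : IsBlock τ (univ.filter (f · ∈ I)) := by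
  refine ⟨⟨?_⟩, fun p hp => ?_⟩
  · simp only [coe_image, coe_filter, mem_univ, true_and, Set.mem_image, Set.mem_ofPred_eq]
    rintro _ ⟨p, hp, rfl⟩ _ ⟨r, hr, rfl⟩ y ⟨hpy, hyr⟩
    have hy : y < m := lt_of_le_of_lt hyr r.isLt
    refine ⟨⟨y, hy⟩, ?_, rfl⟩
    have hmid : ((f ⟨y, hy⟩ : Fin n) : ℕ) ∈ (↑(I.image Fin.val) : Set ℕ) :=
      hI.1.out (mem_image_of_mem _ hp) (mem_image_of_mem _ hr)
        ⟨hf.monotone (Fin.mk_le_mk.2 hpy), hf.monotone (Fin.mk_le_mk.2 hyr)⟩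
    exact Fin.val_injective.mem_finset_image.1 hmid
  · simp only [mem_filter, mem_univ, true_and] at hp ⊢
    refine (hI.2 _ hp).imp (fun h q hq => ?_) (fun h q hq => ?_)
    · exact (hord p q).1 (h _ hq)
    · exact (hord q p).1 (h _ hq)

theorem IsBlock.ordConnected_image {m : ℕ} {τ : Equiv.Perm (Fin m)} {B : Finset (Fin m)}
    (hB : IsBlock τ B) : (↑(B.image fun p => (τ p : ℕ)) : Set ℕ).OrdConnected := by
  refine ⟨?_⟩
  simp only [coe_image, Set.mem_image, mem_coe]
  rintro _ ⟨p, hp, rfl⟩ _ ⟨r, hr, rfl⟩ y ⟨hpy, hyr⟩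
  have hy : y < m := lt_of_le_of_lt hyr (τ r).isLt
  refine ⟨τ.symm ⟨y, hy⟩, ?_, by simp⟩
  by_contra hq
  rcases hB.2 _ hq with h | h
  · exact absurd hpy (by simpa [Fin.lt_def] using h p hp)
  · exact absurd hyr (by simpa [Fin.lt_def] using h r hr)

theorem ClusterFree.card_le_one_of_isBlock {m : ℕ} {τ : Equiv.Perm (Fin m)} (hτ : ClusterFree τ)
    {B : Finset (Fin m)} (hB : IsBlock τ B) (hBu : B ≠ univ) : #B ≤ 1 := by
  by_contra! hcard
  have hne : B.Nonempty := card_pos.1 (by omega)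
  have hlt : #B < m := by simpa using (card_lt_iff_ne_univ B).2 hBu
  obtain ⟨c, hpos⟩ : ∃ c, B.image Fin.val = Ico c (c + #B) := by
    have h := eq_Ico_min'_of_ordConnected hB.1 (hne.image _)
    rw [card_image_of_injective _ Fin.val_injective] at h
    exact ⟨_, h⟩
  obtain ⟨t, hval⟩ : ∃ t, B.image (fun p => (τ p : ℕ)) = Ico t (t + #B) := by
    have h := eq_Ico_min'_of_ordConnected hB.ordConnected_image (hne.image _)
    rw [card_image_of_injective (f := fun p => (τ p : ℕ)) _
      (Fin.val_injective.comp τ.injective)] at h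
    exact ⟨_, h⟩
  have hlast : c + #B - 1 < m := by
    obtain ⟨i, -, hi⟩ := mem_image.1 (hpos ▸ mem_Ico.2 ⟨by omega, by omega⟩ :
      c + #B - 1 ∈ B.image Fin.val)
    omega
  refine hτ #B (c + 1) (t + 1) (by omega) (by omega) (by omega) (by omega) ?_
  have hfilter : univ.filter (fun i : Fin m => c + 1 ≤ (i : ℕ) + 1 ∧ (i : ℕ) + 1 < c + 1 + #B)
      = B := by
    ext i
    rw [← Fin.val_injective.mem_finset_image (s := B), hpos]
    simp only [mem_filter, mem_univ, true_and, mem_Ico]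
    omega
  unfold ClusterAt
  rw [hfilter, ← Function.comp_def (· + 1) fun p => (τ p : ℕ), ← image_image, hval,
    image_add_right_Ico]
  ring_nf

def shiftGe (k d x : ℕ) : ℕ := if x < k then x else x + d

theorem shiftGe_strictMono (k d : ℕ) : StrictMono (shiftGe k d) := by
  intro x y h
  unfold shiftGe
  split_ifs <;> omega

def block (n a l : ℕ) : Finset (Fin n) := univ.filter fun i => a ≤ (i : ℕ) ∧ (i : ℕ) < a + l

def collapse {n l : ℕ} (a : Fin (n - l + 1)) (i : Fin n) : Fin (n - l + 1) :=
  ⟨if (i : ℕ) < a then i else if (i : ℕ) < a + l then a else i + 1 - l, by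
    have := a.isLt; have := i.isLt; split_ifs <;> omega⟩

section collapse

variable {n l : ℕ} {a : Fin (n - l + 1)} {i j : Fin n}

theorem collapse_eq_iff : collapse a i = a ↔ i ∈ block n a l := by
  simp only [collapse, block, mem_filter, mem_univ, true_and, Fin.ext_iff]
  split_ifs <;> omega

theorem collapse_lt_collapse (hij : i < j) (hblock : ¬(i ∈ block n a l ∧ j ∈ block n a l)) :
    collapse a i < collapse a j := by
  simp only [block, mem_filter, mem_univ, true_and] at hblock
  rw [Fin.lt_def] at hij ⊢
  simp only [collapse]
  split_ifs <;> omega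

end collapse

/-- `σ` is the permutation `σ^ρ` of the paper, with `k = η a`. -/
def IsInflation {n l : ℕ} (η : Equiv.Perm (Fin (n - l + 1))) (ρ : Equiv.Perm (Fin l))
    (a : Fin (n - l + 1)) (σ : Fin n → Fin n) : Prop :=
  (∀ i ∉ block n a l, (σ i : ℕ) = shiftGe (η a) (l - 1) (η (collapse a i))) ∧
    ∀ (i : Fin n) (u : Fin l), (i : ℕ) = a + u → (σ i : ℕ) = η a + ρ u

namespace IsInflation

variable {n l : ℕ} {η : Equiv.Perm (Fin (n - l + 1))} {ρ : Equiv.Perm (Fin l)}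
  {a : Fin (n - l + 1)} {σ : Fin n → Fin n}

theorem lt_iff_of_eq_add (h : IsInflation η ρ a σ) {i j : Fin n} {u v : Fin l}
    (hi : (i : ℕ) = a + u) (hj : (j : ℕ) = a + v) : σ i < σ j ↔ ρ u < ρ v := by
  rw [Fin.lt_def, Fin.lt_def, h.2 i u hi, h.2 j v hj]
  omega

theorem lt_iff_collapse_lt (h : IsInflation η ρ a σ) {i j : Fin n}
    (hij : ¬(i ∈ block n a l ∧ j ∈ block n a l)) :
    σ i < σ j ↔ η (collapse a i) < η (collapse a j) := by
  have hout : ∀ i ∉ block n a l, (η (collapse a i) : ℕ) ≠ η a := fun i hi heq =>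
    hi (collapse_eq_iff.1 (η.injective (Fin.ext heq)))
  have hin : ∀ i ∈ block n a l, collapse a i = a ∧ (η a : ℕ) ≤ σ i ∧ (σ i : ℕ) < η a + l := by
    intro i hi
    simp only [block, mem_filter, mem_univ, true_and] at hi
    rw [h.2 i ⟨i - a, by omega⟩ (Nat.add_sub_cancel' hi.1).symm]
    exact ⟨collapse_eq_iff.2 (by simpa [block] using hi), by omega, by simp⟩
  rw [Fin.lt_def, Fin.lt_def]
  by_cases hi : i ∈ block n a l <;> by_cases hj : j ∈ block n a l
  · exact absurd ⟨hi, hj⟩ hij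
  · obtain ⟨hci, hi⟩ := hin i hi
    rw [hci, h.1 j hj]
    have := hout j hj
    unfold shiftGe
    split_ifs <;> omega
  · obtain ⟨hcj, hj⟩ := hin j hj
    rw [hcj, h.1 i hi]
    have := hout i hi
    unfold shiftGe
    split_ifs <;> omega
  · rw [h.1 i hi, h.1 j hj]
    exact (shiftGe_strictMono _ _).lt_iff_lt

theorem injective (h : IsInflation η ρ a σ) : Function.Injective σ := by
  intro i j hij
  by_cases hblock : i ∈ block n a l ∧ j ∈ block n a l
  · obtain ⟨hi, hj⟩ := hblock
    simp only [block, mem_filter, mem_univ, true_and] at hi hj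
    have hρ : ρ ⟨i - a, by omega⟩ = ρ ⟨j - a, by omega⟩ := by
      have hσi := h.2 i ⟨i - a, by omega⟩ (Nat.add_sub_cancel' hi.1).symm
      have hσj := h.2 j ⟨j - a, by omega⟩ (Nat.add_sub_cancel' hj.1).symm
      exact Fin.ext (by rw [hij] at hσi; omega)
    have := Fin.mk.inj_iff.1 (ρ.injective hρ)
    exact Fin.ext (by omega)
  · have hc : collapse a i = collapse a j := by
      refine η.injective (le_antisymm ?_ ?_)
      · exact not_lt.1 fun hlt =>
          ((h.lt_iff_collapse_lt fun hb => hblock hb.symm).2 hlt).ne hij.symm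
      · exact not_lt.1 fun hlt => ((h.lt_iff_collapse_lt hblock).2 hlt).ne hij
    rcases lt_trichotomy i j with hlt | heq | hgt
    · exact absurd hc (collapse_lt_collapse hlt hblock).ne
    · exact heq
    · exact absurd hc.symm (collapse_lt_collapse hgt fun hb => hblock hb.symm).ne

theorem isBlock (h : IsInflation η ρ a σ) : IsBlock σ (block n a l) := by
  refine ⟨⟨?_⟩, fun i hi => ?_⟩
  · simp only [block, coe_image, coe_filter, mem_univ, true_and, Set.mem_image,
      Set.mem_ofPred_eq]
    rintro _ ⟨x, hx, rfl⟩ _ ⟨z, hz, rfl⟩ y ⟨hxy, hyz⟩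
    exact ⟨⟨y, lt_of_le_of_lt hyz z.isLt⟩, ⟨hx.1.trans hxy, hyz.trans_lt hz.2⟩, rfl⟩
  · have hne : η (collapse a i) ≠ η a := fun heq => hi (collapse_eq_iff.1 (η.injective heq))
    rcases lt_or_gt_of_ne hne with hlt | hgt
    · left
      intro j hj
      rwa [h.lt_iff_collapse_lt (fun hb => hi hb.1), collapse_eq_iff.2 hj]
    · right
      intro j hj
      rwa [h.lt_iff_collapse_lt (fun hb => hi hb.2), collapse_eq_iff.2 hj]

theorem avoids {m : ℕ} {τ : Equiv.Perm (Fin m)} (h : IsInflation η ρ a σ) (hτ : ClusterFree τ)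
    (hρ : Avoids ρ τ) (hη : Avoids η τ) : Avoids σ τ := by
  rintro ⟨f, hf, hord⟩
  have hB := hτ.card_le_one_of_isBlock (h.isBlock.preimage hf hord)
  by_cases hall : ∀ p, f p ∈ block n a l
  · simp only [block, mem_filter, mem_univ, true_and] at hall
    refine hρ ⟨fun p => ⟨f p - a, by have := hall p; omega⟩, fun p q hpq => ?_, fun p q => ?_⟩
    · have := Fin.lt_def.1 (hf hpq)
      have := hall p
      exact Fin.mk_lt_mk.2 (by omega)
    · rw [← hord]
      exact (h.lt_iff_of_eq_add (Nat.add_sub_cancel' (hall p).1).symm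
        (Nat.add_sub_cancel' (hall q).1).symm).symm
  · have hsub : ∀ p q, f p ∈ block n a l → f q ∈ block n a l → p = q := by
      refine fun p q hp hq => card_le_one.1 (hB fun hu => hall fun r => ?_) p (by simpa) q
        (by simpa)
      exact (mem_filter.1 (eq_univ_iff_forall.1 hu r)).2
    refine hη ⟨collapse a ∘ f, fun p q hpq => ?_, fun p q => ?_⟩
    · exact collapse_lt_collapse (hf hpq) fun hb => hpq.ne (hsub p q hb.1 hb.2)
    · rcases eq_or_ne p q with rfl | hpq
      · simp
      · rw [← hord]
        exact (h.lt_iff_collapse_lt fun hb => hpq (hsub p q hb.1 hb.2)).symm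

end IsInflation

/-- for cluster-free `τ`, inserting the block `k, k+1, …, k+l-1` in the order
given by a `τ`-avoiding pattern `ρ ∈ S_l` at the position of the value `k` of a `τ`-avoiding
permutation `η` yields a `τ`-avoiding permutation of `[n]`. (Zero-based indexing.) -/
theorem expansion_pattern_avoids (m : ℕ) (τ : Equiv.Perm (Fin m))
    (hτ : ClusterFree τ)
    (l n : ℕ) (hl : 2 ≤ l)
    (ρ : Equiv.Perm (Fin l)) (hρ : Avoids ⇑ρ ⇑τ)
    (η : Equiv.Perm (Fin (n - l + 1))) (hη : Avoids ⇑η ⇑τ)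
    (a k : Fin (n - l + 1)) (hak : η a = k)
    (σ : Fin n → Fin n)
    (hσ : ∀ i : Fin n, (σ i : ℕ) =
      if hia : (i : ℕ) < (a : ℕ) then
        (if (η ⟨(i : ℕ), lt_trans hia a.isLt⟩ : ℕ) < (k : ℕ) then
          (η ⟨(i : ℕ), lt_trans hia a.isLt⟩ : ℕ)
        else (η ⟨(i : ℕ), lt_trans hia a.isLt⟩ : ℕ) + l - 1)
      else if hia2 : (i : ℕ) < (a : ℕ) + l then
        (k : ℕ) + (ρ ⟨(i : ℕ) - (a : ℕ), by omega⟩ : ℕ)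
      else
        (if (η ⟨(i : ℕ) + 1 - l, by have := i.isLt; omega⟩ : ℕ) < (k : ℕ) then
          (η ⟨(i : ℕ) + 1 - l, by have := i.isLt; omega⟩ : ℕ)
        else (η ⟨(i : ℕ) + 1 - l, by have := i.isLt; omega⟩ : ℕ) + l - 1)) :
    Function.Bijective σ ∧ Avoids σ ⇑τ := by
  subst hak
  have hinf : IsInflation η ρ a σ := by
    refine ⟨fun i hi => ?_, fun i u hiu => ?_⟩
    · simp only [block, mem_filter, mem_univ, true_and, not_and, not_lt] at hi
      have hshift : ∀ x : ℕ, x + l - 1 = x + (l - 1) := fun x => by omega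
      rw [hσ i]
      by_cases hia : (i : ℕ) < a
      · simp only [dif_pos hia, shiftGe, collapse, if_pos hia, hshift]
      · have hial : ¬(i : ℕ) < a + l := by omega
        simp only [dif_neg hia, dif_neg hial, shiftGe, collapse, if_neg hia, if_neg hial, hshift]
    · rw [hσ i, dif_neg (by omega), dif_pos (by omega)]
      congr 3
      exact Fin.ext (show (i : ℕ) - a = u by omega)
  exact ⟨Finite.injective_iff_bijective.1 hinf.injective, hinf.avoids hτ hρ hη⟩
end
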